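/- Let (x_s, y_s⋆) ∈ (dom g ∩ dom φ_X) × (dom h⋆ ∩ dom φ_{Y⋆}) be a saddle point of L. Then the iterates (x_k, y_k⋆) of the accelerated nonlinear PDHG method for smooth and strongly convex problems converge strongly to (x_s, y_s⋆), i.e. lim_{k→∞} ‖x_k − x_s‖ = 0 and lim_{k→∞} ‖y_k⋆ − y_s⋆‖ = 0. -/

import Mathlib

open Filter Topology

open Filter Topology Set

section helpers
variable {E : Type*} [NormedAddCommGroup E] [NormedSpace ℝ E]

lemma convexOn_congr' {S : Set E} {f f' : E → ℝ} (h : ConvexOn ℝ S f)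
    (he : ∀ x ∈ S, f x = f' x) : ConvexOn ℝ S f' :=
  ⟨h.1, fun x hx y hy a b ha hb hab => by
    rw [← he _ (h.1 hx hy ha hb hab), ← he x hx, ← he y hy]
    exact h.2 hx hy ha hb hab⟩

lemma convexOn_affineLike {S : Set E} (hS : Convex ℝ S) (c : E → ℝ)
    (haff : ∀ (a b : ℝ), 0 ≤ a → 0 ≤ b → a + b = 1 → ∀ x y, c (a•x + b•y) = a * c x + b * c y) :
    ConvexOn ℝ S c :=
  ⟨hS, fun x hx y hy a b ha hb hab => le_of_eq (haff a b ha hb hab x y)⟩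

lemma bregman_min {S : Set E} (f φ : E → ℝ) (μ : ℝ)
    (hconv : ConvexOn ℝ S (fun z => f z - μ * φ z))
    {u x : E} (hu : u ∈ S) (hx : x ∈ S) {d : ℝ}
    (hd : HasDerivAt (fun t : ℝ => φ (u + t • (x - u))) d 0)
    (hmin : ∀ z ∈ S, f u ≤ f z) :
    f u + μ * (φ x - φ u - d) ≤ f x := by
  have hslope : Tendsto (fun t : ℝ => (φ (u + t • (x - u)) - φ u) / t) (𝓝[>] 0) (𝓝 d) := by
    have h0 := hasDerivAt_iff_tendsto_slope.mp hd
    have : (slope (fun t : ℝ => φ (u + t • (x - u))) 0) = fun t : ℝ => (φ (u + t • (x - u)) - φ u) / t := by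
      funext t
      simp [slope_def_field]
    rw [this] at h0
    exact h0.mono_left (nhdsWithin_mono 0 (fun t ht => ne_of_gt ht))
  have key : ∀ t ∈ Set.Ioc (0:ℝ) 1,
      0 ≤ (f x - f u) + μ * ((φ (u + t • (x - u)) - φ u) / t) + μ * (φ u - φ x) := by
    intro t ⟨ht0, ht1⟩
    have hzeq : u + t • (x - u) = (1 - t) • u + t • x := by
      rw [smul_sub, sub_smul, one_smul]; abel
    have hmem : u + t • (x - u) ∈ S := by
      rw [hzeq]; exact hconv.1 hu hx (by linarith) ht0.le (by ring)
    have hcv := hconv.2 hu hx (by linarith : (0:ℝ) ≤ 1 - t) ht0.le (by ring)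
    rw [← hzeq] at hcv
    simp only [smul_eq_mul] at hcv
    have hm := hmin _ hmem
    have h0 : 0 ≤ t * (f x - f u) + μ * (φ (u + t • (x - u)) - φ u) - t * μ * (φ x - φ u) := by
      nlinarith [hcv, hm]
    have he : (f x - f u) + μ * ((φ (u + t • (x - u)) - φ u) / t) + μ * (φ u - φ x)
        = (t * (f x - f u) + μ * (φ (u + t • (x - u)) - φ u) - t * μ * (φ x - φ u)) / t := by
      field_simp; ring
    rw [he]
    exact div_nonneg h0 ht0.le
  have hlim : Tendsto (fun t : ℝ => (f x - f u) + μ * ((φ (u + t • (x - u)) - φ u) / t) + μ * (φ u - φ x))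
      (𝓝[>] 0) (𝓝 ((f x - f u) + μ * d + μ * (φ u - φ x))) :=
    ((tendsto_const_nhds.add (hslope.const_mul μ)).add tendsto_const_nhds)
  have hev : ∀ᶠ t in 𝓝[>] (0:ℝ), 0 ≤ (f x - f u) + μ * ((φ (u + t • (x - u)) - φ u) / t) + μ * (φ u - φ x) := by
    filter_upwards [Ioc_mem_nhdsGT_of_mem (by norm_num : (0:ℝ) ∈ Set.Ico (0:ℝ) 1)] with t ht
    exact key t ht
  have := ge_of_tendsto hlim hev
  linarith

end helpers

lemma theta_props {γg γh a θ τ σ : ℝ} (hγg : 0 < γg) (hγh : 0 < γh) (ha : 0 < a)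
    (hθ : θ = 1 - (γg * γh / (2 * a ^ 2)) * (Real.sqrt (1 + 4 * a ^ 2 / (γg * γh)) - 1))
    (hτ : τ = (1 - θ) / (γg * θ)) (hσ : σ = (1 - θ) / (γh * θ)) :
    0 < θ ∧ θ < 1 ∧ 0 < τ ∧ 0 < σ ∧ γg * τ * θ = 1 - θ ∧ γh * σ * θ = 1 - θ ∧
      θ * τ * σ * a ^ 2 = 1 := by
  set s := Real.sqrt (1 + 4 * a ^ 2 / (γg * γh)) with hs
  have hc : 0 < γg * γh := mul_pos hγg hγh
  have harg : (0:ℝ) ≤ 1 + 4 * a ^ 2 / (γg * γh) := by positivity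
  have hs2 : s ^ 2 = 1 + 4 * a ^ 2 / (γg * γh) := Real.sq_sqrt harg
  have hsnn : 0 ≤ s := Real.sqrt_nonneg _
  have hs1 : 1 < s := by nlinarith [sq_nonneg a, div_pos (by positivity : (0:ℝ) < 4 * a ^ 2) hc]
  have hc4 : γg * γh * (s ^ 2 - 1) = 4 * a ^ 2 := by
    field_simp at hs2; nlinarith [hs2]
  have hθe : θ * (s + 1) = s - 1 := by
    rw [hθ]; field_simp; nlinarith [hc4]
  have hθpos : 0 < θ := by nlinarith [hθe, hs1]
  have hθlt1 : θ < 1 := by nlinarith [hθe, hs1]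
  have hτpos : 0 < τ := by rw [hτ]; exact div_pos (by linarith) (by positivity)
  have hσpos : 0 < σ := by rw [hσ]; exact div_pos (by linarith) (by positivity)
  have id1 : γg * τ * θ = 1 - θ := by rw [hτ]; field_simp
  have id2 : γh * σ * θ = 1 - θ := by rw [hσ]; field_simp
  refine ⟨hθpos, hθlt1, hτpos, hσpos, id1, id2, ?_⟩
  have hsp : (0:ℝ) < s + 1 := by linarith
  have h1θ' : (1 - θ) * (s + 1) = 2 := by nlinarith [hθe]
  have hkey : (1 - θ) ^ 2 * a ^ 2 * (s + 1) ^ 2 = γg * γh * θ * (s + 1) ^ 2 := by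
    linear_combination (a ^ 2 * ((1 - θ) * (s + 1) + 2)) * h1θ' - (γg * γh * (s + 1)) * hθe - hc4
  have hkey2 : (1 - θ) ^ 2 * a ^ 2 = γg * γh * θ :=
    mul_right_cancel₀ (pow_ne_zero 2 hsp.ne') hkey
  rw [hτ, hσ]
  field_simp
  linear_combination hkey2
set_option maxHeartbeats 1000000 in
theorem const_strong_convergence
    {X Y : Type*} [NormedAddCommGroup X] [NormedSpace ℝ X] [CompleteSpace X]
    [NormedAddCommGroup Y] [NormedSpace ℝ Y] [CompleteSpace Y]
    (A : X →L[ℝ] Y)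
    (φX : X → ℝ) (SX : Set X) (gX : X → (X →L[ℝ] ℝ))
    (φY : (Y →L[ℝ] ℝ) → ℝ) (SY : Set (Y →L[ℝ] ℝ)) (gY : (Y →L[ℝ] ℝ) → Y)
    (hSXne : SX.Nonempty) (hφXconv : ConvexOn ℝ SX φX)
    (hφXlsc : LowerSemicontinuousOn φX SX)
    (hSYne : SY.Nonempty) (hφYconv : ConvexOn ℝ SY φY)
    (hφYlsc : LowerSemicontinuousOn φY SY)
    (hφXdiff : ∀ x ∈ interior SX, ∀ w : X,
      HasDerivAt (fun t : ℝ => φX (x + t • w)) (gX x w) 0)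
    (hφYdiff : ∀ p ∈ interior SY, ∀ q : Y →L[ℝ] ℝ,
      HasDerivAt (fun t : ℝ => φY (p + t • q)) (q (gY p)) 0)
    (DX : X → X → ℝ) (hDXdef : ∀ x x', DX x x' = φX x - φX x' - gX x' (x - x'))
    (DY : (Y →L[ℝ] ℝ) → (Y →L[ℝ] ℝ) → ℝ)
    (hDYdef : ∀ p q, DY p q = φY p - φY q - (p - q) (gY q))
    (hscX : ∀ x ∈ SX, ∀ x' ∈ interior SX, (1/2) * ‖x - x'‖ ^ 2 ≤ DX x x')
    (hscY : ∀ p ∈ SY, ∀ q ∈ interior SY, (1/2) * ‖p - q‖ ^ 2 ≤ DY p q)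
    (g : X → ℝ) (Sg : Set X) (hSgne : Sg.Nonempty)
    (hgconv : ConvexOn ℝ Sg g) (hglsc : LowerSemicontinuousOn g Sg)
    (hst : (Y →L[ℝ] ℝ) → ℝ) (Sh : Set (Y →L[ℝ] ℝ)) (hShne : Sh.Nonempty)
    (hhconv : ConvexOn ℝ Sh hst) (hhlsc : LowerSemicontinuousOn hst Sh)
    (L : X → (Y →L[ℝ] ℝ) → ℝ) (hLdef : ∀ x p, L x p = g x + p (A x) - hst p)
    (γg γh : ℝ) (hγg : 0 < γg) (hγh : 0 < γh)
    (hA6 : ConvexOn ℝ (Sg ∩ SX) (fun x => g x - γg * φX x))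
    (hA7 : ConvexOn ℝ (Sh ∩ SY) (fun p => hst p - γh * φY p))
    (hAne : A ≠ 0)
    (θ τ σ : ℝ)
    (hθdef : θ = 1 - (γg * γh / (2 * ‖A‖ ^ 2)) *
      (Real.sqrt (1 + 4 * ‖A‖ ^ 2 / (γg * γh)) - 1))
    (hτdef : τ = (1 - θ) / (γg * θ)) (hσdef : σ = (1 - θ) / (γh * θ))
    (u : ℕ → X) (v : ℕ → (Y →L[ℝ] ℝ))
    (hu : ∀ k, u k ∈ Sg ∩ interior SX)
    (hv : ∀ k, v k ∈ Sh ∩ interior SY)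
    (hstepx : ∀ k : ℕ, ∀ x ∈ Sg ∩ SX,
      g (u (k+1)) + (v k + θ • (v k - v (k-1))) (A (u (k+1))) + (1/τ) * DX (u (k+1)) (u k) ≤
        g x + (v k + θ • (v k - v (k-1))) (A x) + (1/τ) * DX x (u k))
    (hstepy : ∀ k : ℕ, ∀ p ∈ Sh ∩ SY,
      -hst p + p (A (u (k+1))) - (1/σ) * DY p (v k) ≤
        -hst (v (k+1)) + (v (k+1)) (A (u (k+1))) - (1/σ) * DY (v (k+1)) (v k))
    (Δ : ℕ → X → (Y →L[ℝ] ℝ) → ℝ)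
    (hΔdef : ∀ (k : ℕ) (x : X) (p : Y →L[ℝ] ℝ),
      Δ k x p = (1/τ) * DX x (u k) + (1/σ) * DY p (v k)
        + (θ/σ) * DY (v k) (v (k-1)) + θ * ((v k - v (k-1)) (A (x - u k))))
    (xs : X) (ys : Y →L[ℝ] ℝ) (hxs : xs ∈ Sg ∩ SX) (hys : ys ∈ Sh ∩ SY)
    (hsaddle1 : ∀ p ∈ Sh, L xs p ≤ L xs ys)
    (hsaddle2 : ∀ x ∈ Sg, L xs ys ≤ L x ys)
    :
    Tendsto (fun k => ‖u k - xs‖) atTop (nhds 0) ∧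
    Tendsto (fun k => ‖v k - ys‖) atTop (nhds 0) := by
  obtain ⟨hxsg, hxsX⟩ := hxs
  obtain ⟨hysh, hysY⟩ := hys
  have haA : (0:ℝ) < ‖A‖ := norm_pos_iff.mpr hAne
  obtain ⟨hθpos, hθlt1, hτpos, hσpos, id1, id2, id3⟩ :=
    theta_props hγg hγh haA hθdef hτdef hσdef
  have hτne : τ ≠ 0 := hτpos.ne'
  have hσne : σ ≠ 0 := hσpos.ne'
  have hθne : θ ≠ 0 := hθpos.ne'
  set μX := γg + 1/τ with hμXd
  set μY := γh + 1/σ with hμYd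
  have hmx : θ * μX = 1/τ := by
    rw [hμXd]; field_simp; nlinarith [id1]
  have hmy : θ * μY = 1/σ := by
    rw [hμYd]; field_simp; nlinarith [id2]
  have convexSg : Convex ℝ (Sg ∩ SX) := hA6.1
  have convexSh : Convex ℝ (Sh ∩ SY) := hA7.1
  have memU : ∀ k, u k ∈ Sg ∩ SX := fun k => ⟨(hu k).1, interior_subset (hu k).2⟩
  have memV : ∀ k, v k ∈ Sh ∩ SY := fun k => ⟨(hv k).1, interior_subset (hv k).2⟩
  -- step inequality for x
  have a1 : ∀ k, g (u (k+1)) + (v k + θ • (v k - v (k-1))) (A (u (k+1)))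
      + (1/τ) * DX (u (k+1)) (u k) + μX * DX xs (u (k+1))
      ≤ g xs + (v k + θ • (v k - v (k-1))) (A xs) + (1/τ) * DX xs (u k) := by
    intro k
    have haff : ConvexOn ℝ (Sg ∩ SX) (fun z => (v k + θ • (v k - v (k-1))) (A z)
        - (1/τ) * (gX (u k)) (z - u k) - (1/τ) * φX (u k)) := by
      apply convexOn_affineLike convexSg
      intro a b ha hb hab x y
      have hz : a • x + b • y - u k = a • (x - u k) + b • (y - u k) := by
        rw [smul_sub, smul_sub, show a • x - a • u k + (b • y - b • u k)
          = a • x + b • y - (a + b) • u k by rw [add_smul]; abel, hab, one_smul]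
      rw [hz]
      simp only [map_add, map_smul, smul_eq_mul]
      linear_combination ((1/τ) * φX (u k)) * hab
    have hconvf : ConvexOn ℝ (Sg ∩ SX)
        (fun z => (g z + (v k + θ • (v k - v (k-1))) (A z) + (1/τ) * DX z (u k)) - μX * φX z) := by
      refine convexOn_congr' (hA6.add haff) ?_
      intro z hz
      simp only [Pi.add_apply]
      rw [hDXdef, hμXd]; ring
    have hdd := hφXdiff (u (k+1)) (hu (k+1)).2 (xs - u (k+1))
    have h := bregman_min (fun z => g z + (v k + θ • (v k - v (k-1))) (A z) + (1/τ) * DX z (u k))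
      φX μX hconvf (memU (k+1)) ⟨hxsg, hxsX⟩ hdd (fun z hz => hstepx k z hz)
    rw [hDXdef xs (u (k+1))]
    simpa using h
  -- step inequality for y
  have a2 : ∀ k, hst (v (k+1)) - (v (k+1)) (A (u (k+1))) + (1/σ) * DY (v (k+1)) (v k)
      + μY * DY ys (v (k+1))
      ≤ hst ys - ys (A (u (k+1))) + (1/σ) * DY ys (v k) := by
    intro k
    have haff : ConvexOn ℝ (Sh ∩ SY) (fun p : Y →L[ℝ] ℝ => -p (A (u (k+1)))
        - (1/σ) * ((p - v k) (gY (v k))) - (1/σ) * φY (v k)) := by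
      apply convexOn_affineLike convexSh
      intro a b ha hb hab x y
      simp only [ContinuousLinearMap.add_apply, ContinuousLinearMap.smul_apply,
        ContinuousLinearMap.sub_apply, smul_eq_mul]
      linear_combination ((1/σ) * φY (v k) - (1/σ) * ((v k) (gY (v k)))) * hab
    have hconvf : ConvexOn ℝ (Sh ∩ SY)
        (fun p : Y →L[ℝ] ℝ => (hst p - p (A (u (k+1))) + (1/σ) * DY p (v k)) - μY * φY p) := by
      refine convexOn_congr' (hA7.add haff) ?_
      intro p hp
      simp only [Pi.add_apply]
      rw [hDYdef, hμYd]
      simp only [ContinuousLinearMap.sub_apply]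
      ring
    have hdd := hφYdiff (v (k+1)) (hv (k+1)).2 (ys - v (k+1))
    have h := bregman_min (fun p : Y →L[ℝ] ℝ => hst p - p (A (u (k+1))) + (1/σ) * DY p (v k))
      φY μY hconvf (memV (k+1)) ⟨hysh, hysY⟩ hdd
      (fun p hp => by have := hstepy k p hp; linarith)
    rw [hDYdef ys (v (k+1))]
    simp only [ContinuousLinearMap.sub_apply] at h ⊢
    linarith [h]
  -- saddle point inequality
  have a3 : ∀ k, g xs + (v (k+1)) (A xs) - hst (v (k+1))
      ≤ g (u (k+1)) + ys (A (u (k+1))) - hst ys := by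
    intro k
    have h1 := hsaddle1 (v (k+1)) (memV (k+1)).1
    have h2 := hsaddle2 (u (k+1)) (memU (k+1)).1
    simp only [hLdef] at h1 h2
    linarith
  -- one-step contraction
  have contraction : ∀ k, Δ (k+1) xs ys ≤ θ * Δ k xs ys := by
    intro k
    have h1 := a1 k
    have h2 := a2 k
    have h3 := a3 k
    have hsum0 : (v k + θ•(v k - v (k-1))) (A (u (k+1))) - (v k + θ•(v k - v (k-1))) (A xs)
        + (v (k+1)) (A xs) - (v (k+1)) (A (u (k+1)))
        + (1/τ)*DX (u (k+1)) (u k) + μX*DX xs (u (k+1)) + (1/σ)*DY (v (k+1)) (v k)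
        + μY*DY ys (v (k+1))
        ≤ (1/τ)*DX xs (u k) + (1/σ)*DY ys (v k) := by linarith
    have hsum := mul_le_mul_of_nonneg_left hsum0 hθpos.le
    have eq1 : θ * (μX * DX xs (u (k+1))) = (1/τ) * DX xs (u (k+1)) := by
      rw [← mul_assoc, hmx]
    have eq2 : θ * (μY * DY ys (v (k+1))) = (1/σ) * DY ys (v (k+1)) := by
      rw [← mul_assoc, hmy]
    have hsc1 : (1/2)*‖u (k+1) - u k‖^2 ≤ DX (u (k+1)) (u k) :=
      hscX _ (memU (k+1)).2 _ (hu k).2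
    have hsc2 : (1/2)*‖v k - v (k-1)‖^2 ≤ DY (v k) (v (k-1)) :=
      hscY _ (memV k).2 _ (hv (k-1)).2
    have hE : |(v k - v (k-1)) (A (u (k+1) - u k))| ≤ ‖A‖ * ‖v k - v (k-1)‖ * ‖u (k+1) - u k‖ := by
      rw [← Real.norm_eq_abs]
      calc ‖(v k - v (k-1)) (A (u (k+1) - u k))‖
          ≤ ‖v k - v (k-1)‖ * ‖A (u (k+1) - u k)‖ := ContinuousLinearMap.le_opNorm _ _
        _ ≤ ‖v k - v (k-1)‖ * (‖A‖ * ‖u (k+1) - u k‖) :=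
            mul_le_mul_of_nonneg_left (A.le_opNorm _) (norm_nonneg _)
        _ = ‖A‖ * ‖v k - v (k-1)‖ * ‖u (k+1) - u k‖ := by ring
    have e3q : θ^2 * σ * ‖A‖^2 = θ/τ := by
      field_simp
      linear_combination id3
    have hyoung : θ^2 * |(v k - v (k-1)) (A (u (k+1) - u k))|
        ≤ (θ/τ) * DX (u (k+1)) (u k) + (θ^2/σ) * DY (v k) (v (k-1)) := by
      have hq := mul_nonneg (by positivity : (0:ℝ) ≤ θ^2/(2*σ))
        (sq_nonneg (σ * ‖A‖ * ‖u (k+1) - u k‖ - ‖v k - v (k-1)‖))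
      have e3q2 : θ^2*σ*‖A‖^2*‖u (k+1) - u k‖^2 = (θ/τ)*‖u (k+1) - u k‖^2 := by
        linear_combination (‖u (k+1) - u k‖^2) * e3q
      have hexp : (θ^2/(2*σ))*(σ * ‖A‖ * ‖u (k+1) - u k‖ - ‖v k - v (k-1)‖)^2
          = (1/2)*(θ^2*σ*‖A‖^2*‖u (k+1) - u k‖^2)
            - θ^2*(‖A‖*‖v k - v (k-1)‖*‖u (k+1) - u k‖)
            + (1/2)*(θ^2/σ)*‖v k - v (k-1)‖^2 := by
        field_simp; ring
      rw [hexp] at hq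
      have hbound : θ^2*(‖A‖*‖v k - v (k-1)‖*‖u (k+1) - u k‖)
          ≤ (1/2)*(θ/τ)*‖u (k+1) - u k‖^2 + (1/2)*(θ^2/σ)*‖v k - v (k-1)‖^2 := by
        linarith [hq, e3q2]
      have h5 : θ^2 * |(v k - v (k-1)) (A (u (k+1) - u k))|
          ≤ θ^2 * (‖A‖ * ‖v k - v (k-1)‖ * ‖u (k+1) - u k‖) :=
        mul_le_mul_of_nonneg_left hE (sq_nonneg θ)
      have mul1 := mul_le_mul_of_nonneg_left hsc1 (le_of_lt (div_pos hθpos hτpos))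
      have mul2 := mul_le_mul_of_nonneg_left hsc2
        (le_of_lt (div_pos (by positivity : (0:ℝ) < θ^2) hσpos))
      nlinarith [h5, hbound, mul1, mul2]
    have hy2 : θ^2 * ((v k - v (k-1)) (A (u (k+1) - u k)))
        ≤ (θ/τ) * DX (u (k+1)) (u k) + (θ^2/σ) * DY (v k) (v (k-1)) :=
      le_trans (mul_le_mul_of_nonneg_left (le_abs_self _) (by positivity)) hyoung
    have hy1 : -((θ/τ) * DX (u (k+1)) (u k) + (θ^2/σ) * DY (v k) (v (k-1)))
        ≤ θ^2 * ((v k - v (k-1)) (A (u (k+1) - u k))) := by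
      have := mul_le_mul_of_nonneg_left (neg_abs_le ((v k - v (k-1)) (A (u (k+1) - u k))))
        (by positivity : (0:ℝ) ≤ θ^2)
      nlinarith [hyoung]
    rw [hΔdef (k+1) xs ys, hΔdef k xs ys]
    simp only [Nat.add_sub_cancel]
    simp only [map_sub, ContinuousLinearMap.sub_apply, ContinuousLinearMap.add_apply,
      ContinuousLinearMap.smul_apply, smul_eq_mul] at hsum hy1 ⊢
    ring_nf at hsum hy1 eq1 eq2 ⊢
    linarith [hsum, hy1, eq1, eq2]
  -- geometric decay
  have hgeo : ∀ k, Δ k xs ys ≤ θ^k * Δ 0 xs ys := by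
    intro k
    induction k with
    | zero => simp
    | succ n ih =>
      calc Δ (n+1) xs ys ≤ θ * Δ n xs ys := contraction n
        _ ≤ θ * (θ^n * Δ 0 xs ys) := mul_le_mul_of_nonneg_left ih hθpos.le
        _ = θ^(n+1) * Δ 0 xs ys := by ring
  have e4 : θ * σ * ‖A‖^2 = 1/τ := by
    field_simp
    linear_combination id3
  -- lower bounds on Δ
  have hEk : ∀ k, |(v k - v (k-1)) (A (xs - u k))| ≤ ‖A‖ * ‖v k - v (k-1)‖ * ‖xs - u k‖ := by
    intro k
    rw [← Real.norm_eq_abs]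
    calc ‖(v k - v (k-1)) (A (xs - u k))‖
        ≤ ‖v k - v (k-1)‖ * ‖A (xs - u k)‖ := ContinuousLinearMap.le_opNorm _ _
      _ ≤ ‖v k - v (k-1)‖ * (‖A‖ * ‖xs - u k‖) :=
          mul_le_mul_of_nonneg_left (A.le_opNorm _) (norm_nonneg _)
      _ = ‖A‖ * ‖v k - v (k-1)‖ * ‖xs - u k‖ := by ring
  have hsc0 : ∀ k, (1/2)*‖xs - u k‖^2 ≤ DX xs (u k) := fun k => hscX xs hxsX _ (hu k).2
  have hscy0 : ∀ k, (1/2)*‖ys - v k‖^2 ≤ DY ys (v k) := fun k => hscY ys hysY _ (hv k).2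
  have hscv : ∀ k, (1/2)*‖v k - v (k-1)‖^2 ≤ DY (v k) (v (k-1)) :=
    fun k => hscY _ (memV k).2 _ (hv (k-1)).2
  have hcross_low : ∀ k, -((1/2)*(1/τ)*‖xs - u k‖^2 + (1/2)*(θ/σ)*‖v k - v (k-1)‖^2)
      ≤ θ * ((v k - v (k-1)) (A (xs - u k))) := by
    intro k
    have hq2 := mul_nonneg (by positivity : (0:ℝ) ≤ θ/(2*σ))
      (sq_nonneg (σ * ‖A‖ * ‖xs - u k‖ - ‖v k - v (k-1)‖))
    have hexp2 : (θ/(2*σ))*(σ * ‖A‖ * ‖xs - u k‖ - ‖v k - v (k-1)‖)^2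
        = (1/2)*(θ*σ*‖A‖^2*‖xs - u k‖^2)
          - θ*(‖A‖*‖v k - v (k-1)‖*‖xs - u k‖)
          + (1/2)*(θ/σ)*‖v k - v (k-1)‖^2 := by
      field_simp; ring
    rw [hexp2] at hq2
    have e4q : θ*σ*‖A‖^2*‖xs - u k‖^2 = (1/τ)*‖xs - u k‖^2 := by
      linear_combination (‖xs - u k‖^2) * e4
    have h6 := mul_le_mul_of_nonneg_left (hEk k) hθpos.le
    have h7 := mul_le_mul_of_nonneg_left (neg_abs_le ((v k - v (k-1)) (A (xs - u k)))) hθpos.le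
    ring_nf at hq2 e4q h6 h7 ⊢
    linarith [hq2, e4q, h6, h7]
  have hlow1 : ∀ k, (1/2)*(1/σ)*‖ys - v k‖^2 ≤ Δ k xs ys := by
    intro k
    rw [hΔdef k xs ys]
    have m1 := mul_le_mul_of_nonneg_left (hsc0 k) (by positivity : (0:ℝ) ≤ 1/τ)
    have m2 := mul_le_mul_of_nonneg_left (hscy0 k) (by positivity : (0:ℝ) ≤ 1/σ)
    have m3 := mul_le_mul_of_nonneg_left (hscv k) (by positivity : (0:ℝ) ≤ θ/σ)
    have m4 := hcross_low k
    ring_nf at m1 m2 m3 m4 ⊢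
    linarith [m1, m2, m3, m4]
  have hlow2 : ∀ k, (1/4)*(1/τ)*‖xs - u k‖^2
      ≤ Δ k xs ys + τ*(θ^2*‖A‖^2*‖v k - v (k-1)‖^2) := by
    intro k
    rw [hΔdef k xs ys]
    have hq3 := mul_nonneg (by positivity : (0:ℝ) ≤ 1/(4*τ))
      (sq_nonneg (‖xs - u k‖ - 2*τ*θ*‖A‖*‖v k - v (k-1)‖))
    have hexp3 : (1/(4*τ))*(‖xs - u k‖ - 2*τ*θ*‖A‖*‖v k - v (k-1)‖)^2
        = (1/4)*(1/τ)*‖xs - u k‖^2 - θ*(‖A‖*‖v k - v (k-1)‖*‖xs - u k‖)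
          + τ*(θ^2*‖A‖^2*‖v k - v (k-1)‖^2) := by
      field_simp; ring
    rw [hexp3] at hq3
    have m1 := mul_le_mul_of_nonneg_left (hsc0 k) (by positivity : (0:ℝ) ≤ 1/τ)
    have m2 := mul_le_mul_of_nonneg_left (hscy0 k) (by positivity : (0:ℝ) ≤ 1/σ)
    have m3 := mul_le_mul_of_nonneg_left (hscv k) (by positivity : (0:ℝ) ≤ θ/σ)
    have h6 := mul_le_mul_of_nonneg_left (hEk k) hθpos.le
    have h7 := mul_le_mul_of_nonneg_left (neg_abs_le ((v k - v (k-1)) (A (xs - u k)))) hθpos.le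
    have m2' : (0:ℝ) ≤ (1/σ) * DY ys (v k) := le_trans (by positivity) m2
    have m3' : (0:ℝ) ≤ (θ/σ) * DY (v k) (v (k-1)) := le_trans (by positivity) m3
    ring_nf at hq3 m1 m2' m3' h6 h7 ⊢
    linarith [hq3, m1, m2', m3', h6, h7]
  have hΔnn : ∀ k, 0 ≤ Δ k xs ys := fun k => le_trans (by positivity) (hlow1 k)
  have hΔ0 : Tendsto (fun k => Δ k xs ys) atTop (𝓝 0) := by
    have h1 : Tendsto (fun k => θ^k * Δ 0 xs ys) atTop (𝓝 0) := by
      simpa using (tendsto_pow_atTop_nhds_zero_of_lt_one hθpos.le hθlt1).mul_const (Δ 0 xs ys)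
    exact squeeze_zero hΔnn hgeo h1
  have hvten : Tendsto (fun k => ‖v k - ys‖) atTop (𝓝 0) := by
    have hb : ∀ k, ‖v k - ys‖ ≤ Real.sqrt (2*σ*Δ k xs ys) := by
      intro k
      have h9 : ‖v k - ys‖^2 ≤ 2*σ*Δ k xs ys :=
        calc ‖v k - ys‖^2 = 2*σ*((1/2)*(1/σ)*‖ys - v k‖^2) := by
              rw [norm_sub_rev]; field_simp
          _ ≤ 2*σ*Δ k xs ys := mul_le_mul_of_nonneg_left (hlow1 k) (by positivity)
      exact Real.le_sqrt_of_sq_le h9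
    have hs : Tendsto (fun k => Real.sqrt (2*σ*Δ k xs ys)) atTop (𝓝 0) := by
      have h0 : Tendsto (fun k => 2*σ*Δ k xs ys) atTop (𝓝 0) := by
        simpa using hΔ0.const_mul (2*σ)
      have := (Real.continuous_sqrt.tendsto 0).comp h0
      simpa [Function.comp_def] using this
    exact squeeze_zero (fun k => norm_nonneg _) hb hs
  have hbten : Tendsto (fun k : ℕ => ‖v k - v (k-1)‖) atTop (𝓝 0) := by
    have hm : Tendsto (fun k : ℕ => ‖v (k-1) - ys‖) atTop (𝓝 0) :=
      hvten.comp (tendsto_sub_atTop_nat 1)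
    have hb : ∀ k : ℕ, ‖v k - v (k-1)‖ ≤ ‖v k - ys‖ + ‖v (k-1) - ys‖ := by
      intro k
      calc ‖v k - v (k-1)‖ = ‖(v k - ys) - (v (k-1) - ys)‖ := by
            rw [sub_sub_sub_cancel_right]
        _ ≤ ‖v k - ys‖ + ‖v (k-1) - ys‖ := norm_sub_le _ _
    have := hvten.add hm
    simp only [add_zero] at this
    exact squeeze_zero (fun k => norm_nonneg _) hb this
  have huten : Tendsto (fun k => ‖u k - xs‖) atTop (𝓝 0) := by
    have hb2 : ∀ k, ‖u k - xs‖
        ≤ Real.sqrt (4*τ*Δ k xs ys + (2*τ*θ*‖A‖)^2*‖v k - v (k-1)‖^2) := by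
      intro k
      have h9 : ‖u k - xs‖^2 ≤ 4*τ*Δ k xs ys + (2*τ*θ*‖A‖)^2*‖v k - v (k-1)‖^2 :=
        calc ‖u k - xs‖^2 = 4*τ*((1/4)*(1/τ)*‖xs - u k‖^2) := by
              rw [norm_sub_rev]; field_simp
          _ ≤ 4*τ*(Δ k xs ys + τ*(θ^2*‖A‖^2*‖v k - v (k-1)‖^2)) :=
              mul_le_mul_of_nonneg_left (hlow2 k) (by positivity)
          _ = 4*τ*Δ k xs ys + (2*τ*θ*‖A‖)^2*‖v k - v (k-1)‖^2 := by ring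
      exact Real.le_sqrt_of_sq_le h9
    have hs : Tendsto (fun k => Real.sqrt (4*τ*Δ k xs ys + (2*τ*θ*‖A‖)^2*‖v k - v (k-1)‖^2))
        atTop (𝓝 0) := by
      have t1 : Tendsto (fun k => 4*τ*Δ k xs ys) atTop (𝓝 0) := by
        simpa using hΔ0.const_mul (4*τ)
      have t2 : Tendsto (fun k : ℕ => (2*τ*θ*‖A‖)^2*‖v k - v (k-1)‖^2) atTop (𝓝 0) := by
        have t3 := (hbten.mul hbten).const_mul ((2*τ*θ*‖A‖)^2)
        simp only [mul_zero] at t3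
        convert t3 using 2 with k
        ring
      have t4 := t1.add t2
      simp only [add_zero] at t4
      have := (Real.continuous_sqrt.tendsto 0).comp t4
      simpa [Function.comp_def] using this
    exact squeeze_zero (fun k => norm_nonneg _) hb2 hs
  exact ⟨huten, hvten⟩
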